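/- arXiv:1909.10816 — 2 statements merged into one kernel-verified Lean document; each statement's English description precedes it below -/
import Mathlib

section
/- Let p be a prime, let G₁ and G₂ be commutative groups (written multiplicatively) in which every element x satisfies x^p = 1, and let e : G₁ → G₁ → G₂ be a bilinear pairing. Let g₁, y_S, R_S ∈ G₁ and let y, h_S, h', α be integers with e(y_S, g₁^{h_S} · R_S · g₁^y) = e(g₁, g₁^y)^{h_S} and α·h_S ≡ h' (mod p). Set g₂ = e(g₁, g₁)^y, y' = y_S^α and R' = R_S · (g₁^{(α−1)·h_S})⁻¹. Then for all integers c, x, x', m, m', t with x·x' ≡ 1 (mod p) and m·m' ≡ 1 (mod p), setting σ₁ = g₂^t, σ₂ = (g₁^{h'} · R' · g₁^y)^{(c·m' − t)·x}, Y₁ = (y')^{x'} and Y₂ = g₂^c, one has (Y₂^{m'} · σ₁⁻¹)^{h'} = e(Y₁, σ₂). (This is the full forgery of Theorem 1 of the paper: using the forged partial private key (y', R') for identity hash h', the type 1 adversary generates keys and a signature on any message hash m on behalf of that identity, and this forged signature passes Karati et al.'s verification equation.) -/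
private lemma zpow_congr_mod {G : Type*} [CommGroup G] {p : ℕ}
    (hG : ∀ x : G, x ^ p = 1) (a : G) {n n' : ℤ}
    (h : n ≡ n' [ZMOD (p : ℤ)]) : a ^ n = a ^ n' := by
  obtain ⟨k, hk⟩ := h.dvd
  have hn : n' = n + (p : ℤ) * k := by linarith
  rw [hn, zpow_add, zpow_mul, zpow_natCast, hG, one_zpow, mul_one]

/-- The full forgery of Theorem 1 of the paper: using the forged partial private key
`(y', R') = (y_S ^ α, R_S * (g₁ ^ ((α-1)·h_S))⁻¹)` for identity hash `h'` (where
`α·h_S ≡ h' (mod p)` and `(y_S, R_S)` is a valid partial private key for `h_S`), the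
type 1 adversary generates keys `(Y₁, Y₂) = ((y')^{x'}, g₂^c)` and a signature
`(σ₁, σ₂)` on any message hash `m`, and this forged signature passes Karati et al.'s
verification equation `(Y₂^{1/m} / σ₁) ^ h' = e Y₁ σ₂`. -/
theorem karati_full_forgery
    {G₁ G₂ : Type*} [CommGroup G₁] [CommGroup G₂]
    (p : ℕ) (hp : p.Prime)
    (hG₁ : ∀ x : G₁, x ^ p = 1) (hG₂ : ∀ x : G₂, x ^ p = 1)
    (e : G₁ → G₁ → G₂)
    (he_left : ∀ x y z : G₁, e (x * y) z = e x z * e y z)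
    (he_right : ∀ x y z : G₁, e x (y * z) = e x y * e x z)
    (g₁ y_S R_S : G₁) (y h_S h' α : ℤ)
    (hvalid : e y_S (g₁ ^ h_S * R_S * g₁ ^ y) = e g₁ (g₁ ^ y) ^ h_S)
    (hα : α * h_S ≡ h' [ZMOD (p : ℤ)])
    (g₂ : G₂) (hg₂ : g₂ = e g₁ g₁ ^ y)
    (y' : G₁) (hy' : y' = y_S ^ α)
    (R' : G₁) (hR' : R' = R_S * (g₁ ^ ((α - 1) * h_S))⁻¹) :
    ∀ c x x' m m' t : ℤ,
      x * x' ≡ 1 [ZMOD (p : ℤ)] → m * m' ≡ 1 [ZMOD (p : ℤ)] →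
      ∀ σ₁ : G₂, σ₁ = g₂ ^ t →
      ∀ σ₂ : G₁, σ₂ = (g₁ ^ h' * R' * g₁ ^ y) ^ ((c * m' - t) * x) →
      ∀ Y₁ : G₁, Y₁ = y' ^ x' →
      ∀ Y₂ : G₂, Y₂ = g₂ ^ c →
      (Y₂ ^ m' * σ₁⁻¹) ^ h' = e Y₁ σ₂ := by
  intro c x x' m m' t hxx' _hmm' σ₁ hσ₁ σ₂ hσ₂ Y₁ hY₁ Y₂ hY₂
  subst hσ₁ hσ₂ hY₁ hY₂ hy' hR' hg₂
  -- bilinearity in zpow form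
  have hel : ∀ (a b : G₁) (n : ℤ), e (a ^ n) b = e a b ^ n := fun a b n =>
    (MonoidHom.mk' (fun z => e z b) (fun u v => he_left u v b)).map_zpow a n
  have her : ∀ (a b : G₁) (n : ℤ), e a (b ^ n) = e a b ^ n := fun a b n =>
    (MonoidHom.mk' (fun z => e a z) (fun u v => he_right a u v)).map_zpow b n
  -- the forged key basis equals the real one
  have hbase : g₁ ^ h' * (R_S * (g₁ ^ ((α - 1) * h_S))⁻¹) * g₁ ^ y
      = g₁ ^ h_S * R_S * g₁ ^ y := by
    have h1 : g₁ ^ h' = g₁ ^ (α * h_S) := zpow_congr_mod hG₁ g₁ hα.symm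
    have h2 : g₁ ^ (α * h_S) * (g₁ ^ ((α - 1) * h_S))⁻¹ = g₁ ^ h_S := by
      rw [← zpow_neg, ← zpow_add]
      congr 1
      ring
    calc g₁ ^ h' * (R_S * (g₁ ^ ((α - 1) * h_S))⁻¹) * g₁ ^ y
        = (g₁ ^ (α * h_S) * (g₁ ^ ((α - 1) * h_S))⁻¹) * R_S * g₁ ^ y := by
          rw [h1]; simp [mul_comm, mul_left_comm, mul_assoc]
      _ = g₁ ^ h_S * R_S * g₁ ^ y := by rw [h2]
  rw [hbase]
  -- rewrite RHS using bilinearity and validity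
  have hRHS : e ((y_S ^ α) ^ x') ((g₁ ^ h_S * R_S * g₁ ^ y) ^ ((c * m' - t) * x))
      = e g₁ g₁ ^ (y * h_S * (α * x' * ((c * m' - t) * x))) := by
    rw [← zpow_mul, hel, her, hvalid, her, ← zpow_mul, ← zpow_mul, ← zpow_mul]
    congr 1
    ring
  rw [hRHS]
  -- rewrite LHS as a single power
  have hLHS : (((e g₁ g₁ ^ y) ^ c) ^ m' * ((e g₁ g₁ ^ y) ^ t)⁻¹) ^ h'
      = e g₁ g₁ ^ (y * ((c * m' - t) * h')) := by
    rw [← zpow_mul, ← zpow_mul, ← zpow_neg, ← zpow_mul, ← zpow_add, ← zpow_mul]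
    congr 1
    ring
  rw [hLHS]
  -- exponents agree mod p
  refine zpow_congr_mod hG₂ _ ?_
  calc y * ((c * m' - t) * h') = y * ((c * m' - t) * h') * 1 := by ring
    _ ≡ y * ((c * m' - t) * (α * h_S)) * (x * x') [ZMOD (p : ℤ)] :=
        Int.ModEq.mul (Int.ModEq.mul_left _ (Int.ModEq.mul_left _ hα.symm)) hxx'.symm
    _ = y * h_S * (α * x' * ((c * m' - t) * x)) := by ring
end

section
/- Let G₁ be an additive commutative group, G₂ a multiplicative commutative group, and e : G₁ → G₁ → G₂ a symmetric bilinear pairing. Let P, Q, W ∈ G₁ and let α, x_S, r, h be integers. Set P_pub = α·P, Y_S = x_S·P, D_S = α·Q, R = r·P, and V = D_S + r·W + h·(α·Y_S). Then e(V, P) = e(Q + h·Y_S, P_pub) · e(R, W). (This is Theorem 3 of the paper: in Kumar et al.'s CLS scheme, a type 2 adversary — the malicious KGC knowing the master secret α and hence the partial private key D_S = α·Q, but not the signer's secret value x_S — can forge a valid signature (R, V) on any message with hash value h under any state information with hash W, on behalf of any signer with identity hash Q and public key Y_S.) -/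
section Pairing

variable {G₁ G₂ : Type*} [AddGroup G₁] [Group G₂] {e : G₁ → G₁ → G₂}

theorem pairing_zsmul_left (he_left : ∀ a b c : G₁, e (a + b) c = e a c * e b c)
    (n : ℤ) (a b : G₁) : e (n • a) b = e a b ^ n :=
  (MonoidHom.mk' (fun x : Multiplicative G₁ => e x.toAdd b)
    (fun x y => he_left x.toAdd y.toAdd b)).map_zpow (Multiplicative.ofAdd a) n

theorem pairing_zsmul_right (he_left : ∀ a b c : G₁, e (a + b) c = e a c * e b c)
    (he_symm : ∀ a b : G₁, e a b = e b a) (n : ℤ) (a b : G₁) :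
    e a (n • b) = e a b ^ n := by
  rw [he_symm, pairing_zsmul_left he_left, he_symm]

end Pairing

theorem kumar_type2_forgery_general
    {G₁ G₂ : Type*} [AddCommGroup G₁] [CommGroup G₂]
    (e : G₁ → G₁ → G₂)
    (he_left : ∀ a b c : G₁, e (a + b) c = e a c * e b c)
    (he_symm : ∀ a b : G₁, e a b = e b a)
    (P Q W : G₁) (α r h : ℤ)
    (P_pub : G₁) (hPpub : P_pub = α • P)
    (Y_S : G₁)
    (D_S : G₁) (hDS : D_S = α • Q)
    (R : G₁) (hR : R = r • P)
    (V : G₁) (hV : V = D_S + r • W + h • (α • Y_S)) :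
    e V P = e (Q + h • Y_S) P_pub * e R W := by
  subst hPpub hDS hR hV
  -- both sides expand to `e Q P ^ α * e W P ^ r * e Y_S P ^ (h * α)`
  simp only [he_left, pairing_zsmul_left he_left, pairing_zsmul_right he_left he_symm,
    he_symm W P, ← zpow_mul]
  rw [mul_right_comm, mul_comm α h]

/-- Theorem 3 of the paper: in Kumar et al.'s CLS scheme, a type 2 adversary (the
malicious KGC knowing the master secret `α`, hence the partial private key
`D_S = α • Q`, but not the signer's secret value `x_S`) can forge a valid signature
`(R, V) = (r • P, D_S + r • W + h • (α • Y_S))` on any message with hash value `h`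
under any state information with hash `W`, on behalf of any signer with identity hash
`Q` and public key `Y_S = x_S • P`. -/
theorem kumar_type2_forgery
    {G₁ G₂ : Type*} [AddCommGroup G₁] [CommGroup G₂]
    (e : G₁ → G₁ → G₂)
    (he_left : ∀ a b c : G₁, e (a + b) c = e a c * e b c)
    (he_right : ∀ a b c : G₁, e a (b + c) = e a b * e a c)
    (he_symm : ∀ a b : G₁, e a b = e b a)
    (P Q W : G₁) (α x_S r h : ℤ)
    (P_pub : G₁) (hPpub : P_pub = α • P)
    (Y_S : G₁) (hYS : Y_S = x_S • P)
    (D_S : G₁) (hDS : D_S = α • Q)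
    (R : G₁) (hR : R = r • P)
    (V : G₁) (hV : V = D_S + r • W + h • (α • Y_S)) :
    e V P = e (Q + h • Y_S) P_pub * e R W :=
  kumar_type2_forgery_general e he_left he_symm P Q W α r h P_pub hPpub Y_S D_S hDS R hR V hV
end
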